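/- Let $a,a'\in\mathcal W$, $E\in\mathcal F$, $A=T(a)+E$, $D_i=A^i-T(a^i)$, $\xi=\|a\|_{\mathcal W}+\|E\|_{\mathcal F}$, and $\gamma_i=(i-1)\|a\|_{\mathcal W}^{i-2}\|a'\|_{\mathcal W}^2+\|a\|_{\mathcal W}^{i-1}\|E\|_{\mathcal F}$ for $i\ge 1$. Then $\|D_i\|_{\mathcal F}\le\sum_{j=0}^{i-1}\xi^j\gamma_{i-j}$ for all $i\ge 1$. -/

import Mathlib

open scoped BigOperators

noncomputable section

/-- The ℱ-norm of a semi-infinite matrix: sum of absolute values of all entries. -/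
def Fnorm (S : ℕ → ℕ → ℂ) : ℝ := ∑' p : ℕ × ℕ, ‖S p.1 p.2‖

/-- Membership in ℱ: absolutely summable entries. -/
def MemF (S : ℕ → ℕ → ℂ) : Prop := Summable (fun p : ℕ × ℕ => ‖S p.1 p.2‖)

/-- Product of semi-infinite matrices, entrywise by (absolutely convergent) series. -/
def matMul (A B : ℕ → ℕ → ℂ) : ℕ → ℕ → ℂ := fun i j => ∑' r : ℕ, A i r * B r j

/-- The identity semi-infinite matrix. -/
def idMat : ℕ → ℕ → ℂ := fun i j => if i = j then 1 else 0

/-- Powers of a semi-infinite matrix. -/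
def matPow (A : ℕ → ℕ → ℂ) : ℕ → (ℕ → ℕ → ℂ)
  | 0 => idMat
  | n + 1 => matMul A (matPow A n)

/-- Wiener norm: sum of moduli of the coefficients. -/
def Wnorm (a : ℤ → ℂ) : ℝ := ∑' k : ℤ, ‖a k‖

/-- Membership in the Wiener algebra. -/
def MemW (a : ℤ → ℂ) : Prop := Summable (fun k : ℤ => ‖a k‖)

/-- Wiener norm of the derivative: ∑ |k| |a_k|. -/
def Wnorm' (a : ℤ → ℂ) : ℝ := ∑' k : ℤ, |(k : ℝ)| * ‖a k‖

/-- The derivative has coefficients in the Wiener algebra. -/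
def MemW' (a : ℤ → ℂ) : Prop := Summable (fun k : ℤ => |(k : ℝ)| * ‖a k‖)

/-- The semi-infinite Toeplitz matrix of symbol `a` (0-based indexing): entry (i,j) is a_{j-i}. -/
def Toep (a : ℤ → ℂ) : ℕ → ℕ → ℂ := fun i j => a ((j : ℤ) - (i : ℤ))

/-- Hankel matrix of the strictly negative part of `a`: H(a₋), entry (i,j) = a_{-(i+j-1)} (1-based),
i.e. a_{-(i+j+1)} in 0-based indexing. -/
def Hminus (a : ℤ → ℂ) : ℕ → ℕ → ℂ := fun i j => a (-((i : ℤ) + (j : ℤ) + 1))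

/-- Hankel matrix of the strictly positive part of `a`: H(a₊), entry (i,j) = a_{i+j-1} (1-based),
i.e. a_{i+j+1} in 0-based indexing. -/
def Hplus (a : ℤ → ℂ) : ℕ → ℕ → ℂ := fun i j => a ((i : ℤ) + (j : ℤ) + 1)

/-- Product (convolution) in the Wiener algebra. -/
def convW (a b : ℤ → ℂ) : ℤ → ℂ := fun k => ∑' j : ℤ, a j * b (k - j)

/-- Powers in the Wiener algebra. -/
def powW (a : ℤ → ℂ) : ℕ → (ℤ → ℂ)
  | 0 => fun k => if k = 0 then 1 else 0
  | n + 1 => convW a (powW a n)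

/-- Exponential in the Wiener algebra, coefficientwise. -/
def expW (a : ℤ → ℂ) : ℤ → ℂ := fun k => ∑' m : ℕ, (m.factorial : ℂ)⁻¹ * powW a m k

/-!
All norms are handled through their `ℝ≥0∞`-valued versions, where every series has a value.
Splitting the convolution `∑_{r ∈ ℤ} a_{r-i} b_{j-r}` at `r = 0` gives
`T(a) T(b) = T(ab) - H(a₋) H(b₊)`, hence the recursion
`D_{n+1} = A D_n - H(a₋) H((aⁿ)₊) + E T(aⁿ)` with `D_0 = 0`.
The `ℱ`-norm of a product is bounded by the column `ℓ¹`-norms of the left factor times the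
`ℱ`-norm of the right one, or by the `ℱ`-norm of the left factor times the row `ℓ¹`-norms of the
right one. Since the rows of `H(b₊)` have norm at most `‖b'‖_W`, `‖H(a₋)‖_ℱ ≤ ‖a'‖_W`, and the
Leibniz rule gives `‖(aⁿ)'‖_W ≤ n ‖a‖_Wⁿ⁻¹ ‖a'‖_W`, this yields
`‖D_{n+1}‖_ℱ ≤ ξ ‖D_n‖_ℱ + γ_{n+1}`, and unrolling the recursion gives the sum.
-/

open scoped ENNReal
open Finset

def eFnorm (S : ℕ → ℕ → ℂ) : ℝ≥0∞ := ∑' p : ℕ × ℕ, ‖S p.1 p.2‖ₑ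

def eWnorm (a : ℤ → ℂ) : ℝ≥0∞ := ∑' k : ℤ, ‖a k‖ₑ

def eWnorm' (a : ℤ → ℂ) : ℝ≥0∞ := ∑' k : ℤ, (k.natAbs : ℝ≥0∞) * ‖a k‖ₑ

lemma Fnorm_eq_toReal (S : ℕ → ℕ → ℂ) : Fnorm S = (eFnorm S).toReal := by
  simp [Fnorm, eFnorm, ENNReal.tsum_toReal_eq]

lemma memF_iff_eFnorm_ne_top (S : ℕ → ℕ → ℂ) : MemF S ↔ eFnorm S ≠ ⊤ :=
  tsum_enorm_ne_top_iff_summable_norm.symm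

lemma memF_and_Fnorm_le_of_eFnorm_le {S : ℕ → ℕ → ℂ} {B : ℝ≥0∞} (hB : B ≠ ⊤)
    (h : eFnorm S ≤ B) : MemF S ∧ Fnorm S ≤ B.toReal :=
  ⟨(memF_iff_eFnorm_ne_top S).2 (ne_top_of_le_ne_top hB h),
    (Fnorm_eq_toReal S).trans_le (ENNReal.toReal_mono hB h)⟩

lemma Wnorm_eq_toReal (a : ℤ → ℂ) : Wnorm a = (eWnorm a).toReal := by
  simp [Wnorm, eWnorm, ENNReal.tsum_toReal_eq]

lemma memW_iff_eWnorm_ne_top (a : ℤ → ℂ) : MemW a ↔ eWnorm a ≠ ⊤ :=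
  tsum_enorm_ne_top_iff_summable_norm.symm

lemma natAbs_mul_enorm (k : ℤ) (z : ℂ) : (k.natAbs : ℝ≥0∞) * ‖z‖ₑ = ‖(k : ℝ) • z‖ₑ := by
  rw [enorm_smul, Real.enorm_eq_ofReal_abs, ← Int.cast_abs, ← Nat.cast_natAbs,
    ENNReal.ofReal_natCast]

lemma Wnorm'_eq_toReal (a : ℤ → ℂ) : Wnorm' a = (eWnorm' a).toReal := by
  simp only [Wnorm', eWnorm', natAbs_mul_enorm]
  rw [ENNReal.tsum_toReal_eq fun _ => enorm_ne_top]
  simp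

lemma memW'_iff_eWnorm'_ne_top (a : ℤ → ℂ) : MemW' a ↔ eWnorm' a ≠ ⊤ := by
  simp only [MemW', eWnorm', natAbs_mul_enorm, tsum_enorm_ne_top_iff_summable_norm, norm_smul,
    Real.norm_eq_abs]

lemma ENNReal.tsum_tsum_mul_sub (F G : ℤ → ℝ≥0∞) :
    ∑' k, ∑' j, F j * G (k - j) = (∑' j, F j) * ∑' k, G k := by
  rw [ENNReal.tsum_comm, ← ENNReal.tsum_mul_right]
  refine tsum_congr fun j => ?_
  rw [ENNReal.tsum_mul_left]
  exact congrArg _ ((Equiv.subRight j).tsum_eq G)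

lemma enorm_convW_le (a b : ℤ → ℂ) (k : ℤ) :
    ‖convW a b k‖ₑ ≤ ∑' j, ‖a j‖ₑ * ‖b (k - j)‖ₑ :=
  enorm_tsum_le_tsum_enorm.trans_eq (tsum_congr fun _ => enorm_mul _ _)

lemma eWnorm_convW_le (a b : ℤ → ℂ) : eWnorm (convW a b) ≤ eWnorm a * eWnorm b :=
  (ENNReal.tsum_le_tsum (enorm_convW_le a b)).trans_eq (ENNReal.tsum_tsum_mul_sub (‖a ·‖ₑ) (‖b ·‖ₑ))

lemma eWnorm'_convW_le (a b : ℤ → ℂ) :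
    eWnorm' (convW a b) ≤ eWnorm' a * eWnorm b + eWnorm a * eWnorm' b := by
  calc eWnorm' (convW a b)
      ≤ ∑' k, ∑' j, ((j.natAbs * ‖a j‖ₑ) * ‖b (k - j)‖ₑ
          + ‖a j‖ₑ * ((k - j).natAbs * ‖b (k - j)‖ₑ)) := by
        refine ENNReal.tsum_le_tsum fun k => ?_
        grw [enorm_convW_le, ← ENNReal.tsum_mul_left]
        refine ENNReal.tsum_le_tsum fun j => ?_
        have hk : (k.natAbs : ℝ≥0∞) ≤ j.natAbs + (k - j).natAbs := by
          exact_mod_cast (show k.natAbs ≤ j.natAbs + (k - j).natAbs by omega)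
        grw [hk]
        exact le_of_eq (by ring)
    _ = eWnorm' a * eWnorm b + eWnorm a * eWnorm' b := by
        simp only [ENNReal.tsum_add]
        rw [ENNReal.tsum_tsum_mul_sub (fun j => j.natAbs * ‖a j‖ₑ) (‖b ·‖ₑ),
          ENNReal.tsum_tsum_mul_sub (‖a ·‖ₑ) (fun m => m.natAbs * ‖b m‖ₑ)]
        rfl

lemma toep_powW_zero (a : ℤ → ℂ) : Toep (powW a 0) = idMat := by
  ext i j
  simp [Toep, powW, idMat, sub_eq_zero, eq_comm]

lemma eWnorm_powW_zero (a : ℤ → ℂ) : eWnorm (powW a 0) = 1 := by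
  rw [eWnorm, tsum_eq_single 0 fun k hk => by simp [powW, hk]]
  simp [powW]

lemma eWnorm'_powW_zero (a : ℤ → ℂ) : eWnorm' (powW a 0) = 0 := by
  simp [eWnorm', powW, em]

lemma eWnorm_powW_le (a : ℤ → ℂ) (n : ℕ) : eWnorm (powW a n) ≤ eWnorm a ^ n := by
  induction n with
  | zero => simp [eWnorm_powW_zero]
  | succ n ih =>
    calc eWnorm (powW a (n + 1)) ≤ eWnorm a * eWnorm (powW a n) := eWnorm_convW_le _ _
      _ ≤ eWnorm a ^ (n + 1) := by grw [ih, pow_succ']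

lemma eWnorm'_powW_le (a : ℤ → ℂ) (n : ℕ) :
    eWnorm' (powW a n) ≤ n * eWnorm a ^ (n - 1) * eWnorm' a := by
  induction n with
  | zero => simp [eWnorm'_powW_zero]
  | succ n ih =>
    calc eWnorm' (powW a (n + 1))
        ≤ eWnorm' a * eWnorm (powW a n) + eWnorm a * eWnorm' (powW a n) := eWnorm'_convW_le _ _
      _ ≤ eWnorm' a * eWnorm a ^ n + eWnorm a * (n * eWnorm a ^ (n - 1) * eWnorm' a) := by
        grw [eWnorm_powW_le, ih]
      _ = (n + 1 : ℕ) * eWnorm a ^ n * eWnorm' a := by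
        rcases n with _ | n
        · simp
        · push_cast
          ring

lemma tsum_enorm_add_le {ι E : Type*} [NormedAddCommGroup E] (f g : ι → E) :
    ∑' i, ‖f i + g i‖ₑ ≤ ∑' i, ‖f i‖ₑ + ∑' i, ‖g i‖ₑ :=
  (ENNReal.tsum_le_tsum fun i => enorm_add_le (f i) (g i)).trans_eq ENNReal.tsum_add

lemma eFnorm_add_le (X Y : ℕ → ℕ → ℂ) : eFnorm (X + Y) ≤ eFnorm X + eFnorm Y :=
  tsum_enorm_add_le (fun p : ℕ × ℕ => X p.1 p.2) fun p => Y p.1 p.2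

lemma eFnorm_sub_le (X Y : ℕ → ℕ → ℂ) : eFnorm (X - Y) ≤ eFnorm X + eFnorm Y :=
  (ENNReal.tsum_le_tsum fun _ => enorm_sub_le).trans_eq ENNReal.tsum_add

lemma eFnorm_eq_tsum_tsum (S : ℕ → ℕ → ℂ) : eFnorm S = ∑' i, ∑' j, ‖S i j‖ₑ :=
  ENNReal.tsum_prod (f := fun i j => ‖S i j‖ₑ)

lemma enorm_le_eFnorm (S : ℕ → ℕ → ℂ) (i j : ℕ) : ‖S i j‖ₑ ≤ eFnorm S :=
  ENNReal.le_tsum (i, j)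

lemma tsum_enorm_col_le_eFnorm (S : ℕ → ℕ → ℂ) (j : ℕ) : ∑' i, ‖S i j‖ₑ ≤ eFnorm S :=
  ENNReal.tsum_comp_le_tsum_of_injective (f := fun i => (i, j)) (fun _ _ h => congrArg Prod.fst h)
    (fun p : ℕ × ℕ => ‖S p.1 p.2‖ₑ)

lemma tsum_enorm_row_le_eFnorm (S : ℕ → ℕ → ℂ) (i : ℕ) : ∑' j, ‖S i j‖ₑ ≤ eFnorm S :=
  ENNReal.tsum_comp_le_tsum_of_injective (f := fun j => (i, j)) (fun _ _ h => congrArg Prod.snd h)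
    (fun p : ℕ × ℕ => ‖S p.1 p.2‖ₑ)

lemma enorm_toep_le (a : ℤ → ℂ) (i j : ℕ) : ‖Toep a i j‖ₑ ≤ eWnorm a :=
  ENNReal.le_tsum _

lemma tsum_enorm_toep_col_le (a : ℤ → ℂ) (j : ℕ) : ∑' i, ‖Toep a i j‖ₑ ≤ eWnorm a :=
  ENNReal.tsum_comp_le_tsum_of_injective (fun _ _ h => by simpa using h) (‖a ·‖ₑ)

lemma tsum_enorm_toep_row_le (a : ℤ → ℂ) (i : ℕ) : ∑' j, ‖Toep a i j‖ₑ ≤ eWnorm a :=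
  ENNReal.tsum_comp_le_tsum_of_injective (fun _ _ h => by simpa using h) (‖a ·‖ₑ)

lemma tsum_enorm_hplus_row_le (b : ℤ → ℂ) (i : ℕ) : ∑' j, ‖Hplus b i j‖ₑ ≤ eWnorm' b := by
  refine (ENNReal.tsum_le_tsum fun j => ?_).trans
    (ENNReal.tsum_comp_le_tsum_of_injective (f := fun j : ℕ => (i : ℤ) + j + 1)
      (fun _ _ h => by simpa using h) fun k => (k.natAbs : ℝ≥0∞) * ‖b k‖ₑ)
  refine le_mul_of_one_le_left zero_le ?_
  exact_mod_cast (show 1 ≤ ((i : ℤ) + j + 1).natAbs by omega)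

lemma ENNReal.tsum_prod_add (g : ℕ → ℝ≥0∞) :
    ∑' p : ℕ × ℕ, g (p.1 + p.2) = ∑' n, (n + 1) * g n := by
  rw [← (Finset.HasAntidiagonal.sigmaAntidiagonalEquivProd (A := ℕ)).tsum_eq, ENNReal.tsum_sigma']
  refine tsum_congr fun n => ?_
  rw [tsum_fintype]
  calc ∑ p : antidiagonal n, g ((p : ℕ × ℕ).1 + (p : ℕ × ℕ).2) = ∑ _p : antidiagonal n, g n :=
        Finset.sum_congr rfl fun p _ => by rw [mem_antidiagonal.1 p.2]
    _ = (n + 1) * g n := by simp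

lemma eFnorm_hminus_le (a : ℤ → ℂ) : eFnorm (Hminus a) ≤ eWnorm' a := by
  calc eFnorm (Hminus a) = ∑' n : ℕ, (n + 1) * ‖a (-(n + 1 : ℕ))‖ₑ := by
        rw [← ENNReal.tsum_prod_add]
        simp [eFnorm, Hminus]
    _ ≤ eWnorm' a := by
        refine (ENNReal.tsum_le_tsum fun n => le_of_eq ?_).trans
          (ENNReal.tsum_comp_le_tsum_of_injective (f := fun n : ℕ => -((n + 1 : ℕ) : ℤ))
            (fun _ _ h => by simpa using h) fun k => (k.natAbs : ℝ≥0∞) * ‖a k‖ₑ)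
        rw [Int.natAbs_neg, Int.natAbs_natCast]
        norm_cast

lemma eFnorm_matMul_le (X Y : ℕ → ℕ → ℂ) :
    eFnorm (matMul X Y) ≤ ∑' r, (∑' i, ‖X i r‖ₑ) * ∑' j, ‖Y r j‖ₑ := by
  calc eFnorm (matMul X Y) ≤ ∑' i, ∑' j, ∑' r, ‖X i r‖ₑ * ‖Y r j‖ₑ := by
        rw [eFnorm_eq_tsum_tsum]
        gcongr with i j
        exact enorm_tsum_le_tsum_enorm.trans_eq (tsum_congr fun _ => enorm_mul _ _)
    _ = ∑' r, (∑' i, ‖X i r‖ₑ) * ∑' j, ‖Y r j‖ₑ := by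
        simp_rw [ENNReal.tsum_comm (α := ℕ) (β := ℕ) (f := fun j r => ‖X _ r‖ₑ * ‖Y r j‖ₑ),
          ENNReal.tsum_mul_left]
        rw [ENNReal.tsum_comm]
        simp_rw [ENNReal.tsum_mul_right]

lemma eFnorm_matMul_le_mul_of_col_le {X : ℕ → ℕ → ℂ} {C : ℝ≥0∞}
    (hX : ∀ r, ∑' i, ‖X i r‖ₑ ≤ C) (Y : ℕ → ℕ → ℂ) : eFnorm (matMul X Y) ≤ C * eFnorm Y := by
  grw [eFnorm_matMul_le, ENNReal.tsum_le_tsum fun r => mul_le_mul_left (hX r) _,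
    ENNReal.tsum_mul_left, eFnorm_eq_tsum_tsum]

lemma eFnorm_matMul_le_mul_of_row_le (X : ℕ → ℕ → ℂ) {Y : ℕ → ℕ → ℂ} {C : ℝ≥0∞}
    (hY : ∀ r, ∑' j, ‖Y r j‖ₑ ≤ C) : eFnorm (matMul X Y) ≤ eFnorm X * C := by
  grw [eFnorm_matMul_le, ENNReal.tsum_le_tsum fun r => mul_le_mul_right (hY r) _,
    ENNReal.tsum_mul_right, eFnorm_eq_tsum_tsum, ENNReal.tsum_comm]

lemma summable_mul_of_tsum_enorm_ne_top {ι : Type*} {f g : ι → ℂ} {M : ℝ≥0∞}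
    (hf : ∑' i, ‖f i‖ₑ ≠ ⊤) (hg : ∀ i, ‖g i‖ₑ ≤ M) (hM : M ≠ ⊤) :
    Summable fun i => f i * g i := by
  refine Summable.of_norm (tsum_enorm_ne_top_iff_summable_norm.1 (ne_top_of_le_ne_top
    (ENNReal.mul_ne_top hf hM) ?_))
  rw [← ENNReal.tsum_mul_right]
  exact ENNReal.tsum_le_tsum fun i => (enorm_mul _ _).trans_le (mul_le_mul_right (hg i) _)

lemma matMul_add_left {X Y Z : ℕ → ℕ → ℂ} (hX : ∀ i j, Summable fun r => X i r * Z r j)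
    (hY : ∀ i j, Summable fun r => Y i r * Z r j) :
    matMul (X + Y) Z = matMul X Z + matMul Y Z := by
  ext i j
  simp only [matMul, Pi.add_apply, add_mul]
  exact (hX i j).tsum_add (hY i j)

lemma matMul_add_right {X Y Z : ℕ → ℕ → ℂ} (hY : ∀ i j, Summable fun r => X i r * Y r j)
    (hZ : ∀ i j, Summable fun r => X i r * Z r j) :
    matMul X (Y + Z) = matMul X Y + matMul X Z := by
  ext i j
  simp only [matMul, Pi.add_apply, mul_add]
  exact (hY i j).tsum_add (hZ i j)

lemma matMul_toep_toep {a b : ℤ → ℂ} (ha : eWnorm a ≠ ⊤) (hb : eWnorm b ≠ ⊤) :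
    matMul (Toep a) (Toep b) = Toep (convW a b) - matMul (Hminus a) (Hplus b) := by
  ext i j
  have hsum : Summable fun r : ℤ => a (r - i) * b (j - r) := by
    refine summable_mul_of_tsum_enorm_ne_top ?_ (fun r => ENNReal.le_tsum (j - r)) hb
    exact ((Equiv.subRight (i : ℤ)).tsum_eq (‖a ·‖ₑ)).trans_ne ha
  have hconv : Toep (convW a b) i j = ∑' r : ℤ, a (r - i) * b (j - r) := by
    rw [Toep, convW, ← (Equiv.subRight (i : ℤ)).tsum_eq]
    simp
  have hneg : ∑' n : ℕ, a (-(n + 1) - i) * b (j - -(n + 1)) = matMul (Hminus a) (Hplus b) i j :=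
    tsum_congr fun n => by simp only [Hminus, Hplus]; ring_nf
  rw [Pi.sub_apply, Pi.sub_apply, hconv, tsum_of_nat_of_neg_add_one
    (f := fun r : ℤ => a (r - i) * b (j - r)) (hsum.comp_injective Nat.cast_injective)
    (hsum.comp_injective @Int.negSucc.inj), hneg, add_sub_cancel_right]
  rfl

lemma matPow_sub_toep_powW_succ {a : ℤ → ℂ} {E : ℕ → ℕ → ℂ} (ha : eWnorm a ≠ ⊤)
    (hE : eFnorm E ≠ ⊤) {n : ℕ}
    (hD : eFnorm (matPow (Toep a + E) n - Toep (powW a n)) ≠ ⊤) :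
    matPow (Toep a + E) (n + 1) - Toep (powW a (n + 1)) =
      matMul (Toep a + E) (matPow (Toep a + E) n - Toep (powW a n))
        - matMul (Hminus a) (Hplus (powW a n)) + matMul E (Toep (powW a n)) := by
  set A := Toep a + E
  set b := powW a n
  set D := matPow A n - Toep b
  have hb : eWnorm b ≠ ⊤ := ne_top_of_le_ne_top (ENNReal.pow_ne_top ha) (eWnorm_powW_le a n)
  have hrowT (i : ℕ) : ∑' r, ‖Toep a i r‖ₑ ≠ ⊤ :=
    ne_top_of_le_ne_top ha (tsum_enorm_toep_row_le a i)
  have hrowE (i : ℕ) : ∑' r, ‖E i r‖ₑ ≠ ⊤ := ne_top_of_le_ne_top hE (tsum_enorm_row_le_eFnorm E i)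
  have hrowA (i : ℕ) : ∑' r, ‖A i r‖ₑ ≠ ⊤ :=
    ne_top_of_le_ne_top (ENNReal.add_ne_top.2 ⟨hrowT i, hrowE i⟩) (tsum_enorm_add_le _ _)
  have hXT {X : ℕ → ℕ → ℂ} (hX : ∀ i, ∑' r, ‖X i r‖ₑ ≠ ⊤) (i j : ℕ) :
      Summable fun r => X i r * Toep b r j :=
    summable_mul_of_tsum_enorm_ne_top (hX i) (fun r => enorm_toep_le b r j) hb
  have hAD (i j : ℕ) : Summable fun r => A i r * D r j :=
    summable_mul_of_tsum_enorm_ne_top (hrowA i) (fun r => enorm_le_eFnorm D r j) hD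
  have hpow : matPow A (n + 1) = matMul A D + matMul (Toep a) (Toep b) + matMul E (Toep b) := by
    rw [matPow, ← sub_add_cancel (matPow A n) (Toep b), matMul_add_right hAD (hXT hrowA),
      matMul_add_left (hXT hrowT) (hXT hrowE), add_assoc]
  rw [hpow, matMul_toep_toep ha hb]
  change _ - Toep (convW a b) = _
  abel

lemma eFnorm_matPow_sub_toep_powW_succ_le {a : ℤ → ℂ} {E : ℕ → ℕ → ℂ} (ha : eWnorm a ≠ ⊤)
    (hE : eFnorm E ≠ ⊤) {n : ℕ}
    (hD : eFnorm (matPow (Toep a + E) n - Toep (powW a n)) ≠ ⊤) :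
    eFnorm (matPow (Toep a + E) (n + 1) - Toep (powW a (n + 1))) ≤
      (eWnorm a + eFnorm E) * eFnorm (matPow (Toep a + E) n - Toep (powW a n))
        + (n * eWnorm a ^ (n - 1) * eWnorm' a ^ 2 + eWnorm a ^ n * eFnorm E) := by
  have hA (r : ℕ) : ∑' i, ‖(Toep a + E) i r‖ₑ ≤ eWnorm a + eFnorm E :=
    (tsum_enorm_add_le _ _).trans
      (add_le_add (tsum_enorm_toep_col_le a r) (tsum_enorm_col_le_eFnorm E r))
  have hHH : eFnorm (matMul (Hminus a) (Hplus (powW a n))) ≤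
      n * eWnorm a ^ (n - 1) * eWnorm' a ^ 2 :=
    calc _ ≤ eFnorm (Hminus a) * eWnorm' (powW a n) :=
          eFnorm_matMul_le_mul_of_row_le _ (tsum_enorm_hplus_row_le _)
      _ ≤ eWnorm' a * (n * eWnorm a ^ (n - 1) * eWnorm' a) := by
          grw [eFnorm_hminus_le, eWnorm'_powW_le]
      _ = n * eWnorm a ^ (n - 1) * eWnorm' a ^ 2 := by ring
  have hET : eFnorm (matMul E (Toep (powW a n))) ≤ eWnorm a ^ n * eFnorm E :=
    calc _ ≤ eFnorm E * eWnorm (powW a n) :=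
          eFnorm_matMul_le_mul_of_row_le _ (tsum_enorm_toep_row_le _)
      _ ≤ eWnorm a ^ n * eFnorm E := by grw [eWnorm_powW_le, mul_comm]
  rw [matPow_sub_toep_powW_succ ha hE hD]
  grw [eFnorm_add_le, eFnorm_sub_le, eFnorm_matMul_le_mul_of_col_le hA, hHH, hET, add_assoc]

theorem ENNReal.le_sum_pow_mul_of_le_mul_add {d g : ℕ → ℝ≥0∞} {ξ : ℝ≥0∞} (hξ : ξ ≠ ⊤)
    (hg : ∀ n, g n ≠ ⊤) (h0 : d 0 = 0)
    (hstep : ∀ n, d n ≠ ⊤ → d (n + 1) ≤ ξ * d n + g (n + 1)) (n : ℕ) :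
    d n ≤ ∑ j ∈ range n, ξ ^ j * g (n - j) := by
  induction n with
  | zero => simp [h0]
  | succ n ih =>
    have hfin : d n ≠ ⊤ := ne_top_of_le_ne_top
      (ENNReal.sum_ne_top.2 fun j _ => ENNReal.mul_ne_top (ENNReal.pow_ne_top hξ) (hg _)) ih
    calc d (n + 1) ≤ ξ * d n + g (n + 1) := hstep n hfin
      _ ≤ ξ * ∑ j ∈ range n, ξ ^ j * g (n - j) + g (n + 1) := by grw [ih]
      _ = ∑ j ∈ range (n + 1), ξ ^ j * g (n + 1 - j) := by
        simp only [sum_range_succ', mul_sum, pow_succ', Nat.add_sub_add_right, mul_assoc,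
          pow_zero, one_mul, Nat.sub_zero]

theorem eFnorm_matPow_sub_toep_powW_le {a : ℤ → ℂ} {E : ℕ → ℕ → ℂ} (ha : eWnorm a ≠ ⊤)
    (ha' : eWnorm' a ≠ ⊤) (hE : eFnorm E ≠ ⊤) (n : ℕ) :
    eFnorm (matPow (Toep a + E) n - Toep (powW a n)) ≤
      ∑ j ∈ range n, (eWnorm a + eFnorm E) ^ j *
        ((n - j - 1 : ℕ) * eWnorm a ^ (n - j - 2) * eWnorm' a ^ 2
          + eWnorm a ^ (n - j - 1) * eFnorm E) :=
  ENNReal.le_sum_pow_mul_of_le_mul_add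
    (g := fun m => ((m - 1 : ℕ) : ℝ≥0∞) * eWnorm a ^ (m - 2) * eWnorm' a ^ 2
      + eWnorm a ^ (m - 1) * eFnorm E)
    (by finiteness) (fun _ => by finiteness) (by simp [matPow, toep_powW_zero, eFnorm])
    (fun _ hD => eFnorm_matPow_sub_toep_powW_succ_le ha hE hD) n

theorem stmt17_general (a : ℤ → ℂ) (ha : MemW a) (ha' : MemW' a)
    (E : ℕ → ℕ → ℂ) (hE : MemF E) (i : ℕ) :
    MemF (matPow (Toep a + E) i - Toep (powW a i)) ∧
    Fnorm (matPow (Toep a + E) i - Toep (powW a i)) ≤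
      ∑ j ∈ Finset.range i,
        (Wnorm a + Fnorm E) ^ j *
          ((((i - j : ℕ) : ℝ) - 1) * Wnorm a ^ (i - j - 2) * Wnorm' a ^ 2
            + Wnorm a ^ (i - j - 1) * Fnorm E) := by
  rw [memW_iff_eWnorm_ne_top] at ha
  rw [memW'_iff_eWnorm'_ne_top] at ha'
  rw [memF_iff_eFnorm_ne_top] at hE
  refine (memF_and_Fnorm_le_of_eFnorm_le (ENNReal.sum_ne_top.2 fun _ _ => by finiteness)
    (eFnorm_matPow_sub_toep_powW_le ha ha' hE i)).imp_right fun h => h.trans_eq ?_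
  rw [ENNReal.toReal_sum fun _ _ => by finiteness]
  refine sum_congr rfl fun j hj => ?_
  have hij : 1 ≤ i - j := by simp only [mem_range] at hj; omega
  rw [ENNReal.toReal_mul, ENNReal.toReal_pow, ENNReal.toReal_add ha hE,
    ENNReal.toReal_add (by finiteness) (by finiteness)]
  simp only [ENNReal.toReal_mul, ENNReal.toReal_pow, ENNReal.toReal_natCast, Nat.cast_sub hij,
    Nat.cast_one, Wnorm_eq_toReal, Wnorm'_eq_toReal, Fnorm_eq_toReal]

/-- `‖D_i‖_ℱ ≤ ∑_{j=0}^{i-1} ξ^j γ_{i-j}` with `ξ = ‖a‖_W + ‖E‖_ℱ` and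
`γ_m = (m-1)‖a‖_W^{m-2}‖a'‖_W² + ‖a‖_W^{m-1}‖E‖_ℱ`. -/
theorem stmt17 (a : ℤ → ℂ) (ha : MemW a) (ha' : MemW' a)
    (E : ℕ → ℕ → ℂ) (hE : MemF E) (i : ℕ) (hi : 1 ≤ i) :
    MemF (matPow (Toep a + E) i - Toep (powW a i)) ∧
    Fnorm (matPow (Toep a + E) i - Toep (powW a i)) ≤
      ∑ j ∈ Finset.range i,
        (Wnorm a + Fnorm E) ^ j *
          ((((i - j : ℕ) : ℝ) - 1) * Wnorm a ^ (i - j - 2) * Wnorm' a ^ 2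
            + Wnorm a ^ (i - j - 1) * Fnorm E) :=
  stmt17_general a ha ha' E hE i
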